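/- Let x₁, …, x_n ∈ ℝ be independent one-dimensional Gaussian random variables with standard deviation σ > 0 and arbitrary means. The probability that there exist three distinct indices i, j, k such that x_i, x_j, x_k all lie in a common interval of length ε is at most n³·(ε/σ)². -/

import Mathlib

/-!
By the union bound over ordered triples `(i, j, k)` it suffices to treat one triple of distinct
indices. If `x i, x j, x k` lie in an interval of length `ε`, then `x j` and `x k` both lie in the
closed `ε`-ball around `x i`. Conditionally on `x i` these are independent events, each of
probability at most `2ε / (√(2π) σ) ≤ ε / σ` since the Gaussian density is at most `1 / (√(2π) σ)`.
-/

open MeasureTheory ProbabilityTheory Real Metric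
open scoped ENNReal NNReal

lemma gaussianPDFReal_le (m : ℝ) (v : ℝ≥0) (x : ℝ) :
    gaussianPDFReal m v x ≤ (√(2 * π * v))⁻¹ := by
  refine mul_le_of_le_one_right (by positivity) (exp_le_one_iff.2 ?_)
  exact div_nonpos_of_nonpos_of_nonneg (neg_nonpos.2 (sq_nonneg _)) (by positivity)

lemma gaussianReal_le_mul_volume (m : ℝ) {v : ℝ≥0} (hv : v ≠ 0) (s : Set ℝ) :
    gaussianReal m v s ≤ ENNReal.ofReal (√(2 * π * v))⁻¹ * volume s :=
  calc gaussianReal m v s = ∫⁻ x in s, gaussianPDF m v x := gaussianReal_apply m hv s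
    _ ≤ ∫⁻ _ in s, ENNReal.ofReal (√(2 * π * v))⁻¹ :=
      lintegral_mono fun x ↦ ENNReal.ofReal_le_ofReal (gaussianPDFReal_le m v x)
    _ = ENNReal.ofReal (√(2 * π * v))⁻¹ * volume s := setLIntegral_const s _

lemma gaussianReal_closedBall_le (m : ℝ) {σ : ℝ≥0} (hσ : 0 < σ) (t : ℝ) {ε : ℝ} (hε : 0 ≤ ε) :
    gaussianReal m (σ ^ 2) (closedBall t ε) ≤ ENNReal.ofReal (ε / σ) := by
  refine (gaussianReal_le_mul_volume m (pow_ne_zero 2 hσ.ne') _).trans ?_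
  rw [Real.volume_closedBall, ← ENNReal.ofReal_mul (by positivity)]
  refine ENNReal.ofReal_le_ofReal ?_
  have hsqrt : 2 * (σ : ℝ) ≤ √(2 * π * ↑(σ ^ 2)) := by
    rw [Real.le_sqrt (by positivity) (by positivity)]
    push_cast
    nlinarith [Real.two_le_pi, sq_nonneg (σ : ℝ)]
  calc (√(2 * π * ↑(σ ^ 2)))⁻¹ * (2 * ε) ≤ (2 * (σ : ℝ))⁻¹ * (2 * ε) := by gcongr
    _ = ε / σ := by field_simp

lemma prod_prod_setOf_mem_and_mem_le {X Y Z : Type*} [MeasurableSpace X] [MeasurableSpace Y]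
    [MeasurableSpace Z] (α : Measure X) {β : Measure Y} {γ : Measure Z} [SFinite β] [SFinite γ]
    {N₁ : Set (X × Y)} {N₂ : Set (X × Z)} (hN₁ : MeasurableSet N₁) (hN₂ : MeasurableSet N₂)
    {Λ₁ Λ₂ : ℝ≥0∞} (hβ : ∀ a, β (Prod.mk a ⁻¹' N₁) ≤ Λ₁) (hγ : ∀ a, γ (Prod.mk a ⁻¹' N₂) ≤ Λ₂) :
    α.prod (β.prod γ) {p | (p.1, p.2.1) ∈ N₁ ∧ (p.1, p.2.2) ∈ N₂} ≤ α Set.univ * (Λ₁ * Λ₂) := by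
  have hmeas : MeasurableSet {p : X × Y × Z | (p.1, p.2.1) ∈ N₁ ∧ (p.1, p.2.2) ∈ N₂} :=
    (hN₁.preimage (by fun_prop)).inter (hN₂.preimage (by fun_prop))
  calc α.prod (β.prod γ) {p | (p.1, p.2.1) ∈ N₁ ∧ (p.1, p.2.2) ∈ N₂}
      = ∫⁻ a, β (Prod.mk a ⁻¹' N₁) * γ (Prod.mk a ⁻¹' N₂) ∂α := by
        rw [Measure.prod_apply hmeas]
        exact lintegral_congr fun a ↦ Measure.prod_prod (Prod.mk a ⁻¹' N₁) (Prod.mk a ⁻¹' N₂)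
    _ ≤ ∫⁻ _, Λ₁ * Λ₂ ∂α := lintegral_mono fun a ↦ mul_le_mul' (hβ a) (hγ a)
    _ = α Set.univ * (Λ₁ * Λ₂) := by rw [lintegral_const, mul_comm]

lemma MeasureTheory.Measure.pi_map_eval_prodMk_prodMk {ι : Type*} [Fintype ι] {X : ι → Type*}
    [∀ i, MeasurableSpace (X i)] (P : ∀ i, Measure (X i)) [∀ i, IsProbabilityMeasure (P i)]
    {i j k : ι} (hij : i ≠ j) (hik : i ≠ k) (hjk : j ≠ k) :
    (Measure.pi P).map (fun x ↦ (x i, (x j, x k))) = (P i).prod ((P j).prod (P k)) := by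
  have hindep : iIndepFun (fun l (x : ∀ l, X l) ↦ x l) (Measure.pi P) :=
    iIndepFun_pi (X := fun _ ↦ id) fun _ ↦ aemeasurable_id
  have hmeas (l : ι) : AEMeasurable (fun x : ∀ l, X l ↦ x l) (Measure.pi P) :=
    (measurable_pi_apply l).aemeasurable
  rw [(hindep.indepFun_prodMk (fun l ↦ measurable_pi_apply l) j k i hij.symm hik.symm).symm
      |>.map_prod_eq_prod_map_map (hmeas i) (by fun_prop),
    (hindep.indepFun hjk).map_prod_eq_prod_map_map (hmeas j) (hmeas k)]
  simp only [(measurePreserving_eval P _).map_eq]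

lemma measure_pi_setOf_dist_le_and_dist_le_le {ι X : Type*} [Fintype ι] [PseudoMetricSpace X]
    [MeasurableSpace X] [OpensMeasurableSpace X] [SecondCountableTopology X]
    (P : ι → Measure X) [∀ i, IsProbabilityMeasure (P i)] {ε : ℝ} {Λ : ℝ≥0∞}
    (hP : ∀ l t, P l (closedBall t ε) ≤ Λ) {i j k : ι} (hij : i ≠ j) (hik : i ≠ k) (hjk : j ≠ k) :
    Measure.pi P {x | dist (x j) (x i) ≤ ε ∧ dist (x k) (x i) ≤ ε} ≤ Λ ^ 2 := by
  set N : Set (X × X) := {p | dist p.2 p.1 ≤ ε}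
  have hN : MeasurableSet N := measurableSet_le (measurable_snd.dist measurable_fst) measurable_const
  calc Measure.pi P {x | dist (x j) (x i) ≤ ε ∧ dist (x k) (x i) ≤ ε}
      ≤ (Measure.pi P).map (fun x ↦ (x i, (x j, x k)))
          {p | (p.1, p.2.1) ∈ N ∧ (p.1, p.2.2) ∈ N} :=
        Measure.le_map_apply (by fun_prop) _
    _ ≤ P i Set.univ * (Λ * Λ) := by
        rw [Measure.pi_map_eval_prodMk_prodMk P hij hik hjk]
        exact prod_prod_setOf_mem_and_mem_le _ hN hN (hP j) (hP k)
    _ = Λ ^ 2 := by rw [measure_univ, one_mul, sq]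

theorem three_points_in_interval_prob (n : ℕ) (μ : Fin n → ℝ) (σ : NNReal)
    (hσ : 0 < σ) (ε : ℝ) (hε : 0 < ε) :
    Measure.pi (fun i : Fin n => gaussianReal (μ i) (σ ^ 2))
      {x : Fin n → ℝ |
        ∃ i j k : Fin n, i ≠ j ∧ i ≠ k ∧ j ≠ k ∧
          ∃ a : ℝ, x i ∈ Set.Icc a (a + ε) ∧ x j ∈ Set.Icc a (a + ε) ∧
            x k ∈ Set.Icc a (a + ε)} ≤
      ENNReal.ofReal ((n : ℝ) ^ 3 * (ε / σ) ^ 2) := by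
  set P : Fin n → Measure ℝ := fun i ↦ gaussianReal (μ i) (σ ^ 2)
  set Λ := ENNReal.ofReal (ε / σ)
  set near : Fin n × Fin n × Fin n → Set (Fin n → ℝ) := fun t ↦
    {x | (t.1 ≠ t.2.1 ∧ t.1 ≠ t.2.2 ∧ t.2.1 ≠ t.2.2) ∧
      dist (x t.2.1) (x t.1) ≤ ε ∧ dist (x t.2.2) (x t.1) ≤ ε}
  have hsub : {x : Fin n → ℝ | ∃ i j k : Fin n, i ≠ j ∧ i ≠ k ∧ j ≠ k ∧
      ∃ a : ℝ, x i ∈ Set.Icc a (a + ε) ∧ x j ∈ Set.Icc a (a + ε) ∧ x k ∈ Set.Icc a (a + ε)} ⊆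
      ⋃ t, near t := by
    rintro x ⟨i, j, k, hij, hik, hjk, a, hi, hj, hk⟩
    have hdist {y z : ℝ} (hy : y ∈ Set.Icc a (a + ε)) (hz : z ∈ Set.Icc a (a + ε)) :
        dist y z ≤ ε := by simpa using Real.dist_le_of_mem_Icc hy hz
    exact Set.mem_iUnion.2 ⟨(i, j, k), ⟨hij, hik, hjk⟩, hdist hj hi, hdist hk hi⟩
  have hnear (t) : Measure.pi P (near t) ≤ Λ ^ 2 := by
    by_cases ht : t.1 ≠ t.2.1 ∧ t.1 ≠ t.2.2 ∧ t.2.1 ≠ t.2.2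
    · refine (measure_mono fun x hx ↦ hx.2).trans ?_
      exact measure_pi_setOf_dist_le_and_dist_le_le P
        (fun l x ↦ gaussianReal_closedBall_le (μ l) hσ x hε.le) ht.1 ht.2.1 ht.2.2
    · simp [near, ht]
  calc _ ≤ Measure.pi P (⋃ t, near t) := measure_mono hsub
    _ ≤ ∑ t, Measure.pi P (near t) := measure_iUnion_fintype_le _ _
    _ ≤ ∑ _ : Fin n × Fin n × Fin n, Λ ^ 2 := Finset.sum_le_sum fun t _ ↦ hnear t
    _ = ENNReal.ofReal ((n : ℝ) ^ 3 * (ε / σ) ^ 2) := by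
        rw [ENNReal.ofReal_mul (by positivity), ENNReal.ofReal_pow (by positivity),
          ENNReal.ofReal_pow (by positivity)]
        simp only [Finset.sum_const, Finset.card_univ, Fintype.card_prod, Fintype.card_fin,
          nsmul_eq_mul, Nat.cast_mul, ENNReal.ofReal_natCast, Λ]
        ring
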